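/- arXiv:2605.03406 — 4 statements merged into one kernel-verified Lean document; each statement's English description precedes it below -/
import Mathlib

section
/- Suppose the mixed-integer linear program (MILP) is feasible. Then its optimal value equals the optimal value of the SAA problem, and for any optimal solution (θ̂, ŵ, ρ̂, τ̂) of the MILP, the vector θ̂ = (θ̂_1,…,θ̂_K) is an optimal solution of the SAA problem. -/
open Finset

noncomputable section

open Classical in
/-- Real-valued indicator of a proposition. -/
def ind (p : Prop) : ℝ := if p then 1 else 0

/-- Feasibility for the SAA problem: `θ` lies in the box (in its first `K`
coordinates, which are the only relevant ones), the empirical type-1 constraint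
`(1/M) ∑_m 1{S^m_k ≤ θ_k ∀ k ∈ [K]} ≥ 1−α` holds, and the empirical type-2
constraint `(1/M) ∑_m 1{S^m_{a,k} < θ_k ∀ k ∈ [K]} ≤ β` holds.
Stages are 0-indexed: stage `k < K` is the paper's stage `k+1`. -/
def saaFeas (K M : ℕ) (α β θlo θhi : ℝ) (S Sa : Fin M → ℕ → ℝ) (θ : ℕ → ℝ) : Prop :=
  (∀ k < K, θ k ∈ Set.Icc θlo θhi) ∧
  1 - α ≤ (1 / M : ℝ) * ∑ m : Fin M, ind (∀ k < K, S m k ≤ θ k) ∧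
  (1 / M : ℝ) * ∑ m : Fin M, ind (∀ k < K, Sa m k < θ k) ≤ β

/-- SAA objective `n_1 + (1/M) ∑_m ∑_{k=2}^K n_k 1{S^m_{a,i} < θ_i ∀ i ∈ [k−1]}`. -/
def saaObj (K M : ℕ) (n : ℕ → ℕ) (Sa : Fin M → ℕ → ℝ) (θ : ℕ → ℝ) : ℝ :=
  (n 0 : ℝ) + (1 / M : ℝ) * ∑ m : Fin M, ∑ k ∈ Finset.Ico 1 K,
    (n k : ℝ) * ind (∀ i < k, Sa m i < θ i)

/-- Feasibility for the MILP reformulation.  The binary variable `w m` stands for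
the paper's `w^m`, `ρ m k` for `ρ^m_{k+1}` and `τ m k` for `τ^m_{k+1}`
(stages 0-indexed). -/
def milpFeas (K M : ℕ) (α β θlo θhi : ℝ) (S Sa : Fin M → ℕ → ℝ)
    (θ : ℕ → ℝ) (w : Fin M → ℝ) (ρ τ : Fin M → ℕ → ℝ) : Prop :=
  (∀ k < K, θ k ∈ Set.Icc θlo θhi) ∧
  (∀ m, w m = 0 ∨ w m = 1) ∧
  (∀ m, ∀ k < K, ρ m k = 0 ∨ ρ m k = 1) ∧
  (∀ m, ∀ k < K, τ m k = 0 ∨ τ m k = 1) ∧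
  (∀ m, ∀ k < K, S m k - θ k ≤ (S m k - θlo) * w m) ∧
  1 - α ≤ (1 / M : ℝ) * ∑ m : Fin M, (1 - w m) ∧
  (∀ m, ∀ k < K, θ k - Sa m k ≤ ρ m k * (θhi - Sa m k)) ∧
  (∀ m, ∀ k < K, (∑ i ∈ Finset.range (k + 1), ρ m i) - (k : ℝ) ≤ τ m k) ∧
  (1 / M : ℝ) * ∑ m : Fin M, τ m (K - 1) ≤ β

/-- MILP objective `n_1 + (1/M) ∑_m ∑_{k=2}^K n_k τ^m_{k−1}`. -/
def milpObj (K M : ℕ) (n : ℕ → ℕ) (τ : Fin M → ℕ → ℝ) : ℝ :=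
  (n 0 : ℝ) + (1 / M : ℝ) * ∑ m : Fin M, ∑ k ∈ Finset.Ico 1 K,
    (n k : ℝ) * τ m (k - 1)

lemma ind_nonneg (p : Prop) : 0 ≤ ind p := by
  unfold ind; split <;> norm_num

lemma ind_le_one (p : Prop) : ind p ≤ 1 := by
  unfold ind; split <;> norm_num

lemma ind_of (p : Prop) (h : p) : ind p = 1 := by
  unfold ind; rw [if_pos h]

lemma ind_of_not (p : Prop) (h : ¬ p) : ind p = 0 := by
  unfold ind; rw [if_neg h]

lemma ind_binary (p : Prop) : ind p = 0 ∨ ind p = 1 := by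
  unfold ind; split <;> simp

/-- Key lemma A: a MILP-feasible point yields an SAA-feasible `θ` whose SAA
objective is at most the MILP objective. -/
lemma keyA (K M : ℕ) (hK : 0 < K) (hM : 0 < M) (n : ℕ → ℕ)
    (α β θlo θhi : ℝ) (S Sa : Fin M → ℕ → ℝ)
    (θ : ℕ → ℝ) (w : Fin M → ℝ) (ρ τ : Fin M → ℕ → ℝ)
    (h : milpFeas K M α β θlo θhi S Sa θ w ρ τ) :
    saaFeas K M α β θlo θhi S Sa θ ∧ saaObj K M n Sa θ ≤ milpObj K M n τ := by
  obtain ⟨hbox, hw01, hρ01, hτ01, hwc, hα1, hρc, hτc, hβ1⟩ := h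
  have hMpos : (0:ℝ) < M := by exact_mod_cast hM
  have hMinv : (0:ℝ) ≤ 1 / M := by positivity
  -- claim 1 : 1 - w m ≤ indicator
  have claim1 : ∀ m : Fin M, 1 - w m ≤ ind (∀ k < K, S m k ≤ θ k) := by
    intro m
    rcases hw01 m with h0 | h1
    · have hall : ∀ k < K, S m k ≤ θ k := by
        intro k hk
        have := hwc m k hk
        rw [h0, mul_zero] at this
        linarith
      rw [ind_of _ hall, h0]; norm_num
    · rw [h1]; simpa using ind_nonneg _
  -- claim ρ : indicator forces ρ = 1
  have claimρ : ∀ m : Fin M, ∀ k, k < K → Sa m k < θ k → ρ m k = 1 := by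
    intro m k hk hlt
    rcases hρ01 m k hk with h0 | h1
    · exfalso
      have := hρc m k hk
      rw [h0, zero_mul] at this
      linarith
    · exact h1
  -- claim τ : indicator ≤ τ
  have claimτ : ∀ m : Fin M, ∀ k, k < K →
      ind (∀ i < k + 1, Sa m i < θ i) ≤ τ m k := by
    intro m k hk
    by_cases hall : ∀ i < k + 1, Sa m i < θ i
    · rw [ind_of _ hall]
      have hsum : ∑ i ∈ Finset.range (k+1), ρ m i = (k : ℝ) + 1 := by
        have heach : ∀ i ∈ Finset.range (k+1), ρ m i = 1 := by
          intro i hi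
          rw [Finset.mem_range] at hi
          exact claimρ m i (lt_of_le_of_lt (Nat.lt_succ_iff.mp hi) hk) (hall i hi)
        rw [Finset.sum_congr rfl heach, Finset.sum_const, Finset.card_range]
        simp
      have := hτc m k hk
      rw [hsum] at this
      linarith
    · rw [ind_of_not _ hall]
      rcases hτ01 m k hk with h0 | h0 <;> simp [h0]
  have hfeasθ : saaFeas K M α β θlo θhi S Sa θ := by
    refine ⟨hbox, ?_, ?_⟩
    · calc 1 - α ≤ (1 / M : ℝ) * ∑ m : Fin M, (1 - w m) := hα1
        _ ≤ (1 / M : ℝ) * ∑ m : Fin M, ind (∀ k < K, S m k ≤ θ k) := by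
            apply mul_le_mul_of_nonneg_left _ hMinv
            exact Finset.sum_le_sum fun m _ => claim1 m
    · have hKK : K - 1 + 1 = K := Nat.succ_pred_eq_of_pos hK
      have hK1 : K - 1 < K := Nat.sub_lt hK one_pos
      calc (1 / M : ℝ) * ∑ m : Fin M, ind (∀ k < K, Sa m k < θ k)
          ≤ (1 / M : ℝ) * ∑ m : Fin M, τ m (K-1) := by
            apply mul_le_mul_of_nonneg_left _ hMinv
            apply Finset.sum_le_sum
            intro m _
            have := claimτ m (K-1) hK1
            rwa [hKK] at this
        _ ≤ β := hβ1
  refine ⟨hfeasθ, ?_⟩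
  unfold saaObj milpObj
  have hma : ∀ m : Fin M,
      ∑ k ∈ Finset.Ico 1 K, (n k : ℝ) * ind (∀ i < k, Sa m i < θ i)
        ≤ ∑ k ∈ Finset.Ico 1 K, (n k : ℝ) * τ m (k-1) := by
    intro m
    apply Finset.sum_le_sum
    intro k hk
    rw [Finset.mem_Ico] at hk
    have hk1 : k - 1 + 1 = k := Nat.succ_pred_eq_of_pos hk.1
    have hk1K : k - 1 < K := lt_of_le_of_lt (Nat.sub_le k 1) hk.2
    have := claimτ m (k-1) hk1K
    rw [hk1] at this
    exact mul_le_mul_of_nonneg_left this (Nat.cast_nonneg _)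
  exact add_le_add_right
    (mul_le_mul_of_nonneg_left (Finset.sum_le_sum fun m _ => hma m) hMinv) _

/-- Key lemma B: an SAA-feasible `θ` can be completed to a MILP-feasible point
with the same objective value. -/
lemma keyB (K M : ℕ) (hK : 0 < K) (hM : 0 < M) (n : ℕ → ℕ)
    (α β θlo θhi : ℝ) (S Sa : Fin M → ℕ → ℝ) (θ : ℕ → ℝ)
    (h : saaFeas K M α β θlo θhi S Sa θ) :
    ∃ w ρ τ, milpFeas K M α β θlo θhi S Sa θ w ρ τ ∧
      milpObj K M n τ = saaObj K M n Sa θ := by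
  obtain ⟨hbox, h1, h2⟩ := h
  refine ⟨fun m => 1 - ind (∀ k < K, S m k ≤ θ k),
    fun m k => ind (Sa m k < θ k),
    fun m k => ind (∀ i < k + 1, Sa m i < θ i), ?_, ?_⟩
  · refine ⟨hbox, ?_, ?_, ?_, ?_, ?_, ?_, ?_, ?_⟩
    · intro m
      dsimp only
      rcases ind_binary (∀ k < K, S m k ≤ θ k) with h0 | h1'
      · rw [h0]; right; norm_num
      · rw [h1']; left; norm_num
    · intro m k _; exact ind_binary _
    · intro m k _; exact ind_binary _
    · intro m k hk
      dsimp only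
      by_cases hall : ∀ k < K, S m k ≤ θ k
      · rw [ind_of _ hall]
        have := hall k hk
        norm_num; linarith
      · rw [ind_of_not _ hall]
        have := (hbox k hk).1
        norm_num; linarith
    · have : ∀ m : Fin M, 1 - (1 - ind (∀ k < K, S m k ≤ θ k))
          = ind (∀ k < K, S m k ≤ θ k) := fun m => by ring
      rw [Finset.sum_congr rfl fun m _ => this m]
      exact h1
    · intro m k hk
      dsimp only
      by_cases hlt : Sa m k < θ k
      · rw [ind_of _ hlt, one_mul]
        have := (hbox k hk).2
        linarith
      · rw [ind_of_not _ hlt, zero_mul]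
        push_neg at hlt
        linarith
    · intro m k hk
      dsimp only
      by_cases hall : ∀ i < k + 1, Sa m i < θ i
      · rw [ind_of _ hall]
        have hle : ∑ i ∈ Finset.range (k+1), ind (Sa m i < θ i) ≤ (k : ℝ) + 1 := by
          calc ∑ i ∈ Finset.range (k+1), ind (Sa m i < θ i)
              ≤ ∑ i ∈ Finset.range (k+1), 1 :=
                Finset.sum_le_sum fun i _ => ind_le_one _
            _ = (k : ℝ) + 1 := by simp
        linarith
      · rw [ind_of_not _ hall]
        push_neg at hall
        obtain ⟨i0, hi0, hge⟩ := hall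
        have hmem : i0 ∈ Finset.range (k+1) := Finset.mem_range.mpr hi0
        have hle : ∑ i ∈ Finset.range (k+1), ind (Sa m i < θ i) ≤ (k : ℝ) := by
          rw [← Finset.add_sum_erase _ _ hmem, ind_of_not _ (not_lt.mpr hge), zero_add]
          calc ∑ i ∈ (Finset.range (k+1)).erase i0, ind (Sa m i < θ i)
              ≤ ∑ i ∈ (Finset.range (k+1)).erase i0, 1 :=
                Finset.sum_le_sum fun i _ => ind_le_one _
            _ = (k : ℝ) := by
                rw [Finset.sum_const, Finset.card_erase_of_mem hmem, Finset.card_range]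
                simp
        linarith
    · have hKK : K - 1 + 1 = K := Nat.succ_pred_eq_of_pos hK
      have : ∀ m : Fin M, ind (∀ i < K - 1 + 1, Sa m i < θ i)
          = ind (∀ k < K, Sa m k < θ k) := by
        intro m; rw [hKK]
      rw [Finset.sum_congr rfl fun m _ => this m]
      exact h2
  · unfold milpObj saaObj
    congr 1
    congr 1
    apply Finset.sum_congr rfl
    intro m _
    apply Finset.sum_congr rfl
    intro k hk
    rw [Finset.mem_Ico] at hk
    have hk1 : k - 1 + 1 = k := Nat.succ_pred_eq_of_pos hk.1
    dsimp only
    rw [hk1]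

/-- Proposition `milp-equivalence`. If the MILP is feasible, it
has the same optimal value as the SAA problem, and for any optimal MILP solution
`(θ̂, ŵ, ρ̂, τ̂)` the vector `θ̂` is an optimal solution of the SAA problem. -/
theorem milp_saa_equivalence
    (K M : ℕ) (hK : 0 < K) (hM : 0 < M) (n : ℕ → ℕ)
    (α β : ℝ) (hα : α ∈ Set.Ioo (0 : ℝ) 1) (hβ : β ∈ Set.Ioo (0 : ℝ) 1)
    (θlo θhi : ℝ) (hθ : θlo < θhi)
    (S Sa : Fin M → ℕ → ℝ)
    (hfeas : ∃ θ w ρ τ, milpFeas K M α β θlo θhi S Sa θ w ρ τ) :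
    sInf {v : ℝ | ∃ θ w ρ τ,
        milpFeas K M α β θlo θhi S Sa θ w ρ τ ∧ milpObj K M n τ = v} =
      sInf {v : ℝ | ∃ θ, saaFeas K M α β θlo θhi S Sa θ ∧ saaObj K M n Sa θ = v} ∧
    ∀ θ w ρ τ, milpFeas K M α β θlo θhi S Sa θ w ρ τ →
      (∀ θ' w' ρ' τ', milpFeas K M α β θlo θhi S Sa θ' w' ρ' τ' →
        milpObj K M n τ ≤ milpObj K M n τ') →
      saaFeas K M α β θlo θhi S Sa θ ∧
        ∀ θ', saaFeas K M α β θlo θhi S Sa θ' →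
          saaObj K M n Sa θ ≤ saaObj K M n Sa θ' := by
  have hMpos : (0:ℝ) < M := by exact_mod_cast hM
  have hMinv : (0:ℝ) ≤ 1 / M := by positivity
  set A := {v : ℝ | ∃ θ w ρ τ,
      milpFeas K M α β θlo θhi S Sa θ w ρ τ ∧ milpObj K M n τ = v} with hA
  set B := {v : ℝ | ∃ θ, saaFeas K M α β θlo θhi S Sa θ ∧ saaObj K M n Sa θ = v}
    with hB
  have hAne : A.Nonempty := by
    obtain ⟨θ, w, ρ, τ, hf⟩ := hfeas
    exact ⟨milpObj K M n τ, θ, w, ρ, τ, hf, rfl⟩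
  have hBne : B.Nonempty := by
    obtain ⟨θ, w, ρ, τ, hf⟩ := hfeas
    exact ⟨saaObj K M n Sa θ, θ,
      (keyA K M hK hM n α β θlo θhi S Sa θ w ρ τ hf).1, rfl⟩
  have hsub : B ⊆ A := by
    rintro v ⟨θ, hθf, rfl⟩
    obtain ⟨w, ρ, τ, hf, heq⟩ := keyB K M hK hM n α β θlo θhi S Sa θ hθf
    exact ⟨θ, w, ρ, τ, hf, heq⟩
  have hAbdd : BddBelow A := by
    refine ⟨0, ?_⟩
    rintro v ⟨θ, w, ρ, τ, hf, rfl⟩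
    obtain ⟨_, _, _, hτ01, _, _, _, _, _⟩ := hf
    unfold milpObj
    have hsum : (0:ℝ) ≤ ∑ m : Fin M, ∑ k ∈ Finset.Ico 1 K, (n k : ℝ) * τ m (k-1) := by
      apply Finset.sum_nonneg
      intro m _
      apply Finset.sum_nonneg
      intro k hk
      rw [Finset.mem_Ico] at hk
      have hk1K : k - 1 < K := lt_of_le_of_lt (Nat.sub_le k 1) hk.2
      rcases hτ01 m (k-1) hk1K with h0 | h1
      · rw [h0, mul_zero]
      · rw [h1, mul_one]; exact Nat.cast_nonneg _
    have : (0:ℝ) ≤ (n 0 : ℝ) := Nat.cast_nonneg _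
    nlinarith
  have hBbdd : BddBelow B := by
    refine ⟨0, ?_⟩
    rintro v ⟨θ, hθf, rfl⟩
    unfold saaObj
    have hsum : (0:ℝ) ≤ ∑ m : Fin M, ∑ k ∈ Finset.Ico 1 K,
        (n k : ℝ) * ind (∀ i < k, Sa m i < θ i) := by
      apply Finset.sum_nonneg
      intro m _
      apply Finset.sum_nonneg
      intro k _
      exact mul_nonneg (Nat.cast_nonneg _) (ind_nonneg _)
    have : (0:ℝ) ≤ (n 0 : ℝ) := Nat.cast_nonneg _
    nlinarith
  constructor
  · apply le_antisymm
    · exact csInf_le_csInf hAbdd hBne hsub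
    · apply le_csInf hAne
      rintro v ⟨θ, w, ρ, τ, hf, rfl⟩
      obtain ⟨hθf, hle⟩ := keyA K M hK hM n α β θlo θhi S Sa θ w ρ τ hf
      exact le_trans (csInf_le hBbdd ⟨θ, hθf, rfl⟩) hle
  · intro θ w ρ τ hf hopt
    obtain ⟨hθf, hle⟩ := keyA K M hK hM n α β θlo θhi S Sa θ w ρ τ hf
    refine ⟨hθf, fun θ' hθ' => ?_⟩
    obtain ⟨w', ρ', τ', hf', heq⟩ := keyB K M hK hM n α β θlo θhi S Sa θ' hθ'
    calc saaObj K M n Sa θ ≤ milpObj K M n τ := hle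
      _ ≤ milpObj K M n τ' := hopt θ' w' ρ' τ' hf'
      _ = saaObj K M n Sa θ' := heq
end
end

section
/- Suppose there exists ε̄ > 0 such that Θ(α−ε̄, β−ε̄) ≠ ∅. Then for every η ∈ (0,1) and every integer M ≥ log(2/η)/(2ε̄²), with probability at least 1−η the SAA feasible set Θ_M(α,β) is nonempty. -/
open MeasureTheory ProbabilityTheory Finset
open scoped ENNReal

noncomputable section

section Aux
open Real MeasureTheory ProbabilityTheory
open Real

lemma bern_mgf_le (p : ℝ) (hp0 : 0 ≤ p) (hp1 : p ≤ 1) (t : ℝ) :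
    1 + (Real.exp t - 1) * p ≤ Real.exp (p * t + t ^ 2 / 8) := by
  have hu : ∀ x : ℝ, 0 < 1 - p + p * Real.exp x := by
    intro x
    rcases eq_or_lt_of_le hp0 with h | h
    · simp [← h]
    · have := Real.exp_pos x
      nlinarith
  set g : ℝ → ℝ := fun x => p * x + x ^ 2 / 8 - Real.log (1 - p + p * Real.exp x) with hg
  set g1 : ℝ → ℝ := fun x => p + x / 4 - p * Real.exp x / (1 - p + p * Real.exp x) with hg1
  have hder : ∀ x, HasDerivAt g (g1 x) x := by
    intro x
    have hu' : HasDerivAt (fun x => 1 - p + p * Real.exp x) (p * Real.exp x) x :=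
      ((Real.hasDerivAt_exp x).const_mul p).const_add (1 - p)
    have hlog : HasDerivAt (fun x => Real.log (1 - p + p * Real.exp x))
        (p * Real.exp x / (1 - p + p * Real.exp x)) x := hu'.log (hu x).ne'
    have h1 : HasDerivAt (fun x : ℝ => p * x) p x := by
      simpa using (hasDerivAt_id x).const_mul p
    have h2 : HasDerivAt (fun x : ℝ => x ^ 2 / 8) (x / 4) x := by
      have := (hasDerivAt_pow 2 x).div_const 8
      refine this.congr_deriv ?_
      norm_num
      ring
    exact (h1.add h2).sub hlog
  have hder1 : ∀ x, HasDerivAt g1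
      (1 / 4 - p * (1 - p) * Real.exp x / (1 - p + p * Real.exp x) ^ 2) x := by
    intro x
    have hu' : HasDerivAt (fun x => 1 - p + p * Real.exp x) (p * Real.exp x) x :=
      ((Real.hasDerivAt_exp x).const_mul p).const_add (1 - p)
    have hnum : HasDerivAt (fun x => p * Real.exp x) (p * Real.exp x) x :=
      (Real.hasDerivAt_exp x).const_mul p
    have hdiv := hnum.div hu' (hu x).ne'
    have h2 : HasDerivAt (fun x : ℝ => p + x / 4) (1 / 4) x := by
      simpa using ((hasDerivAt_id x).div_const 4).const_add p
    have := h2.sub hdiv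
    refine this.congr_deriv ?_
    have h3 : (1 - p + p * Real.exp x) ≠ 0 := (hu x).ne'
    field_simp
    ring
  have h2nonneg : ∀ x : ℝ,
      0 ≤ 1 / 4 - p * (1 - p) * Real.exp x / (1 - p + p * Real.exp x) ^ 2 := by
    intro x
    rw [sub_nonneg, div_le_iff₀ (pow_pos (hu x) 2)]
    nlinarith [sq_nonneg (1 - p - p * Real.exp x), Real.exp_pos x]
  have hg1mono : Monotone g1 :=
    monotone_of_hasDerivAt_nonneg hder1 h2nonneg
  have hg10 : g1 0 = 0 := by
    have : (1 : ℝ) - p + p * Real.exp 0 = 1 := by simp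
    simp [hg1, this]
  have hgcont : Continuous g := by
    have : Differentiable ℝ g := fun x => (hder x).differentiableAt
    exact this.continuous
  have hg0 : g 0 = 0 := by
    have : (1 : ℝ) - p + p * Real.exp 0 = 1 := by simp
    simp [hg, this]
  have hgnonneg : ∀ x : ℝ, 0 ≤ g x := by
    intro x
    rcases le_or_gt 0 x with hx | hx
    · have hmono : MonotoneOn g (Set.Ici 0) := by
        apply monotoneOn_of_deriv_nonneg (convex_Ici 0) hgcont.continuousOn
        · exact fun y _ => ((hder y).differentiableAt).differentiableWithinAt
        · intro y hy
          rw [(hder y).deriv]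
          rw [interior_Ici] at hy
          have := hg1mono (le_of_lt hy)
          rw [hg10] at this
          exact this
      have := hmono Set.self_mem_Ici hx hx
      rwa [hg0] at this
    · have hanti : AntitoneOn g (Set.Iic 0) := by
        apply antitoneOn_of_deriv_nonpos (convex_Iic 0) hgcont.continuousOn
        · exact fun y _ => ((hder y).differentiableAt).differentiableWithinAt
        · intro y hy
          rw [(hder y).deriv]
          rw [interior_Iic] at hy
          have := hg1mono (le_of_lt hy)
          rw [hg10] at this
          linarith
      have := hanti hx.le Set.self_mem_Iic hx.le
      rwa [hg0] at this
  have hlog := hgnonneg t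
  have : Real.log (1 - p + p * Real.exp t) ≤ p * t + t ^ 2 / 8 := by
    simp only [hg] at hlog; linarith
  have h := (Real.log_le_iff_le_exp (hu t)).mp this
  calc 1 + (Real.exp t - 1) * p = 1 - p + p * Real.exp t := by ring
    _ ≤ _ := h
variable {Ω ι : Type*} [MeasurableSpace Ω] {P : Measure Ω} [IsProbabilityMeasure P]

lemma mgf_indicator_sum_le {W : ι → Ω → ℝ}
    (hindep : iIndepFun W P)
    (hmeas : ∀ i, Measurable (W i)) (s : Finset ι) {p : ℝ}
    (h01 : ∀ i ω, W i ω = 0 ∨ W i ω = 1)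
    (hmean : ∀ i ∈ s, ∫ ω, W i ω ∂P = p)
    (hp0 : 0 ≤ p) (hp1 : p ≤ 1) (t : ℝ) :
    mgf (∑ i ∈ s, W i) P t ≤ Real.exp ((s.card : ℝ) * (p * t + t ^ 2 / 8)) := by
  have hint : ∀ i, Integrable (W i) P := fun i =>
    (integrable_const (1 : ℝ)).mono' (hmeas i).aestronglyMeasurable
      (Filter.Eventually.of_forall fun ω => by rcases h01 i ω with h | h <;> simp [h])
  have hmgf : ∀ i ∈ s, mgf (W i) P t = 1 + (Real.exp t - 1) * p := by
    intro i hi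
    unfold mgf
    have heq : (fun ω => Real.exp (t * W i ω)) = fun ω => 1 + (Real.exp t - 1) * W i ω :=
      funext fun ω => by rcases h01 i ω with h | h <;> simp [h]
    rw [heq, integral_add (integrable_const 1) ((hint i).const_mul _), integral_const,
      integral_const_mul, hmean i hi]
    simp
  rw [hindep.mgf_sum hmeas s]
  calc ∏ i ∈ s, mgf (W i) P t = (1 + (Real.exp t - 1) * p) ^ s.card := by
        rw [Finset.prod_congr rfl hmgf, Finset.prod_const]
    _ ≤ Real.exp (p * t + t ^ 2 / 8) ^ s.card := by
        apply pow_le_pow_left₀ _ (bern_mgf_le p hp0 hp1 t)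
        nlinarith [Real.exp_pos t]
    _ = Real.exp ((s.card : ℝ) * (p * t + t ^ 2 / 8)) := by
        rw [← Real.exp_nat_mul]

lemma tail_lower {W : ι → Ω → ℝ}
    (hindep : iIndepFun W P)
    (hmeas : ∀ i, Measurable (W i)) (s : Finset ι) {p ε : ℝ}
    (h01 : ∀ i ω, W i ω = 0 ∨ W i ω = 1)
    (hmean : ∀ i ∈ s, ∫ ω, W i ω ∂P = p)
    (hp0 : 0 ≤ p) (hp1 : p ≤ 1) (hε : 0 < ε) :
    (P {ω | ∑ i ∈ s, W i ω ≤ (s.card : ℝ) * (p - ε)}).toReal ≤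
      Real.exp (-2 * s.card * ε ^ 2) := by
  set t : ℝ := -4 * ε with ht_def
  have ht : t ≤ 0 := by simp [ht_def]; positivity
  have hXmeas : Measurable (fun ω => ∑ i ∈ s, W i ω) :=
    Finset.measurable_sum s fun i _ => hmeas i
  have hX0 : ∀ ω, 0 ≤ ∑ i ∈ s, W i ω := fun ω =>
    Finset.sum_nonneg fun i _ => by rcases h01 i ω with h | h <;> simp [h]
  have hintexp : Integrable (fun ω => Real.exp (t * ∑ i ∈ s, W i ω)) P := by
    refine (integrable_const (1 : ℝ)).mono' ((hXmeas.const_mul t).exp).aestronglyMeasurable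
      (Filter.Eventually.of_forall fun ω => ?_)
    rw [Real.norm_eq_abs, abs_of_pos (Real.exp_pos _), ← Real.exp_zero]
    exact Real.exp_le_exp.mpr (mul_nonpos_of_nonpos_of_nonneg ht (hX0 ω))
  have hch := measure_le_le_exp_mul_mgf (μ := P) (X := fun ω => ∑ i ∈ s, W i ω)
    ((s.card : ℝ) * (p - ε)) ht hintexp
  have hsum : (fun ω => ∑ i ∈ s, W i ω) = ∑ i ∈ s, W i := by
    funext ω; simp [Finset.sum_apply]
  rw [hsum] at hch
  refine hch.trans ?_
  have hm := mgf_indicator_sum_le hindep hmeas s h01 hmean hp0 hp1 t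
  calc Real.exp (-t * ((s.card : ℝ) * (p - ε))) * mgf (∑ i ∈ s, W i) P t
      ≤ Real.exp (-t * ((s.card : ℝ) * (p - ε))) *
        Real.exp ((s.card : ℝ) * (p * t + t ^ 2 / 8)) := by
        exact mul_le_mul_of_nonneg_left hm (Real.exp_pos _).le
    _ = Real.exp (-2 * s.card * ε ^ 2) := by
        rw [← Real.exp_add]; congr 1; rw [ht_def]; ring

lemma tail_upper {W : ι → Ω → ℝ}
    (hindep : iIndepFun W P)
    (hmeas : ∀ i, Measurable (W i)) (s : Finset ι) {p ε : ℝ}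
    (h01 : ∀ i ω, W i ω = 0 ∨ W i ω = 1)
    (hmean : ∀ i ∈ s, ∫ ω, W i ω ∂P = p)
    (hp0 : 0 ≤ p) (hp1 : p ≤ 1) (hε : 0 < ε) :
    (P {ω | (s.card : ℝ) * (p + ε) ≤ ∑ i ∈ s, W i ω}).toReal ≤
      Real.exp (-2 * s.card * ε ^ 2) := by
  set t : ℝ := 4 * ε with ht_def
  have ht : 0 ≤ t := by positivity
  have hXmeas : Measurable (fun ω => ∑ i ∈ s, W i ω) :=
    Finset.measurable_sum s fun i _ => hmeas i
  have hX1 : ∀ ω, ∑ i ∈ s, W i ω ≤ (s.card : ℝ) := fun ω => by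
    calc ∑ i ∈ s, W i ω ≤ ∑ i ∈ s, (1 : ℝ) :=
          Finset.sum_le_sum fun i _ => by rcases h01 i ω with h | h <;> simp [h]
      _ = (s.card : ℝ) := by simp
  have hintexp : Integrable (fun ω => Real.exp (t * ∑ i ∈ s, W i ω)) P := by
    refine (integrable_const (Real.exp (t * s.card))).mono'
      ((hXmeas.const_mul t).exp).aestronglyMeasurable
      (Filter.Eventually.of_forall fun ω => ?_)
    rw [Real.norm_eq_abs, abs_of_pos (Real.exp_pos _)]
    exact Real.exp_le_exp.mpr (mul_le_mul_of_nonneg_left (hX1 ω) ht)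
  have hch := measure_ge_le_exp_mul_mgf (μ := P) (X := fun ω => ∑ i ∈ s, W i ω)
    ((s.card : ℝ) * (p + ε)) ht hintexp
  have hsum : (fun ω => ∑ i ∈ s, W i ω) = ∑ i ∈ s, W i := by
    funext ω; simp [Finset.sum_apply]
  rw [hsum] at hch
  refine hch.trans ?_
  have hm := mgf_indicator_sum_le hindep hmeas s h01 hmean hp0 hp1 t
  calc Real.exp (-t * ((s.card : ℝ) * (p + ε))) * mgf (∑ i ∈ s, W i) P t
      ≤ Real.exp (-t * ((s.card : ℝ) * (p + ε))) *
        Real.exp ((s.card : ℝ) * (p * t + t ^ 2 / 8)) := by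
        exact mul_le_mul_of_nonneg_left hm (Real.exp_pos _).le
    _ = Real.exp (-2 * s.card * ε ^ 2) := by
        rw [← Real.exp_add]; congr 1; rw [ht_def]; ring

end Aux


/-- Cumulative stage sample sizes `n_{1:k} = n_1 + ⋯ + n_k` (stages are 0-indexed,
so stage `k : Fin K` is the paper's stage `k+1`). -/
def Ncum {K : ℕ} (n : Fin K → ℕ) (k : Fin K) : ℕ := ∑ i ∈ Finset.Iic k, n i

/-- Total sample size `N = n_1 + ⋯ + n_K`. -/
def Ntot {K : ℕ} (n : Fin K → ℕ) : ℕ := ∑ i, n i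

/-- The z-test statistic path: `S_k = (∑_{i ≤ n_{1:k}} x_i) / (σ √(n_{1:k}))`. -/
def zStat {K : ℕ} (σ : ℝ) (n : Fin K → ℕ) (x : Fin (Ntot n) → ℝ) (k : Fin K) : ℝ :=
  (∑ i : Fin (Ntot n), if (i : ℕ) < Ncum n k then x i else 0) /
    (σ * Real.sqrt (Ncum n k))

/-- Joint law of the path `(S_1, …, S_K)` when the data are i.i.d. `N(μ, σ²)`. -/
def zPathLaw {K : ℕ} (σ μ : ℝ) (n : Fin K → ℕ) : Measure (Fin K → ℝ) :=
  Measure.map (zStat σ n)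
    (Measure.pi fun _ : Fin (Ntot n) => gaussianReal μ ⟨σ ^ 2, sq_nonneg σ⟩)

/-- `g₀(θ) = P(S_k ≤ θ_k, ∀ k ∈ [K] | H₀)`. -/
def gNull {K : ℕ} (σ : ℝ) (n : Fin K → ℕ) (θ : Fin K → ℝ) : ℝ :=
  (zPathLaw σ 0 n {s | ∀ k, s k ≤ θ k}).toReal

/-- `g_a(θ) = P(S_k < θ_k, ∀ k ∈ [K] | H_a)`. -/
def gAlt {K : ℕ} (σ μa : ℝ) (n : Fin K → ℕ) (θ : Fin K → ℝ) : ℝ :=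
  (zPathLaw σ μa n {s | ∀ k, s k < θ k}).toReal

/-- Expected sample size under the alternative:
`f(θ) = n_1 + ∑_{k=2}^K n_k · P(S_i < θ_i, ∀ i ∈ [k−1] | H_a)`. -/
def fObj {K : ℕ} (hK : 0 < K) (σ μa : ℝ) (n : Fin K → ℕ) (θ : Fin K → ℝ) : ℝ :=
  (n ⟨0, hK⟩ : ℝ) +
    ∑ k ∈ Finset.univ.filter (fun k : Fin K => k ≠ ⟨0, hK⟩),
      (n k : ℝ) * (zPathLaw σ μa n {s | ∀ i < k, s i < θ i}).toReal

/-- Membership in the box `C = [θlo, θhi]^K`. -/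
def inBox {K : ℕ} (θlo θhi : ℝ) (θ : Fin K → ℝ) : Prop := ∀ k, θ k ∈ Set.Icc θlo θhi

/-- Feasible set `Θ(α, β)` of the true design problem. -/
def Feas {K : ℕ} (σ μa : ℝ) (n : Fin K → ℕ) (θlo θhi α β : ℝ) : Set (Fin K → ℝ) :=
  {θ | inBox θlo θhi θ ∧ 1 - α ≤ gNull σ n θ ∧ gAlt σ μa n θ ≤ β}

/-- Empirical `ĝ₀` built from `M` simulated null paths. -/
def empNull {K M : ℕ} (S : Fin M → Fin K → ℝ) (θ : Fin K → ℝ) : ℝ :=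
  (1 / M : ℝ) * ∑ m : Fin M, ind (∀ k, S m k ≤ θ k)

/-- Empirical `ĝ_a` built from `M` simulated alternative paths. -/
def empAlt {K M : ℕ} (Sa : Fin M → Fin K → ℝ) (θ : Fin K → ℝ) : ℝ :=
  (1 / M : ℝ) * ∑ m : Fin M, ind (∀ k, Sa m k < θ k)

/-- Empirical (SAA) objective `f̂_M`. -/
def empObj {K M : ℕ} (hK : 0 < K) (n : Fin K → ℕ) (Sa : Fin M → Fin K → ℝ)
    (θ : Fin K → ℝ) : ℝ :=
  (n ⟨0, hK⟩ : ℝ) + (1 / M : ℝ) *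
    ∑ m : Fin M, ∑ k ∈ Finset.univ.filter (fun k : Fin K => k ≠ ⟨0, hK⟩),
      (n k : ℝ) * ind (∀ i < k, Sa m i < θ i)

/-- SAA feasible set `Θ_M(α, β)`. -/
def FeasM {K M : ℕ} (S Sa : Fin M → Fin K → ℝ) (θlo θhi α β : ℝ) :
    Set (Fin K → ℝ) :=
  {θ | inBox θlo θhi θ ∧ 1 - α ≤ empNull S θ ∧ empAlt Sa θ ≤ β}

/-- Lemma `SAA-feasibility`. If `Θ(α−ε̄, β−ε̄)` is nonempty for some
`ε̄ > 0`, then for every `η ∈ (0,1)` and every `M ≥ log(2/η)/(2ε̄²)`, with probability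
at least `1−η` the SAA feasible set `Θ_M(α,β)` is nonempty. -/
theorem saa_feasibility
    {K : ℕ} (hK : 0 < K) (n : Fin K → ℕ) (σ μa : ℝ) (hσ : 0 < σ) (hμa : 0 < μa)
    (α β θlo θhi : ℝ) (hα : α ∈ Set.Ioo (0 : ℝ) 1) (hβ : β ∈ Set.Ioo (0 : ℝ) 1)
    (hθ : θlo < θhi)
    (εbar : ℝ) (hεbar : 0 < εbar)
    (hne : (Feas σ μa n θlo θhi (α - εbar) (β - εbar)).Nonempty)
    (η : ℝ) (hη : η ∈ Set.Ioo (0 : ℝ) 1)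
    (M : ℕ) (hM : Real.log (2 / η) / (2 * εbar ^ 2) ≤ (M : ℝ))
    {Ω : Type*} [MeasurableSpace Ω] (P : Measure Ω) [IsProbabilityMeasure P]
    (S Sa : Fin M → Ω → Fin K → ℝ)
    (hSmeas : ∀ m, Measurable (S m)) (hSameas : ∀ m, Measurable (Sa m))
    (hSlaw : ∀ m, P.map (S m) = zPathLaw σ 0 n)
    (hSalaw : ∀ m, P.map (Sa m) = zPathLaw σ μa n)
    (hindep : iIndepFun (Sum.elim S Sa) P) :
    ENNReal.ofReal (1 - η) ≤
      P {ω | (FeasM (fun m => S m ω) (fun m => Sa m ω) θlo θhi α β).Nonempty} := by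
    classical
  -- extract the strictly feasible point
  obtain ⟨θ, hθbox, hθN, hθA⟩ := hne
  have hη0 := hη.1
  have hη1 := hη.2
  -- M is positive
  have hlogpos : 0 < Real.log (2 / η) := Real.log_pos (by rw [lt_div_iff₀ hη0]; linarith)
  have hMposR : (0 : ℝ) < M := lt_of_lt_of_le (by positivity) hM
  have hMpos : 0 < M := by exact_mod_cast hMposR
  -- measurable target sets
  have measN : MeasurableSet {s : Fin K → ℝ | ∀ k, s k ≤ θ k} := by
    have h : {s : Fin K → ℝ | ∀ k, s k ≤ θ k} = ⋂ k, {s : Fin K → ℝ | s k ≤ θ k} := by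
      ext s; simp [Set.mem_iInter]
    rw [h]
    exact MeasurableSet.iInter fun k =>
      measurableSet_le (measurable_pi_apply k) measurable_const
  have measA : MeasurableSet {s : Fin K → ℝ | ∀ k, s k < θ k} := by
    have h : {s : Fin K → ℝ | ∀ k, s k < θ k} = ⋂ k, {s : Fin K → ℝ | s k < θ k} := by
      ext s; simp [Set.mem_iInter]
    rw [h]
    exact MeasurableSet.iInter fun k =>
      measurableSet_lt (measurable_pi_apply k) measurable_const
  -- indicator maps
  set gL : (Fin K → ℝ) → ℝ := fun s => ind (∀ k, s k ≤ θ k) with hgL_def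
  set gR : (Fin K → ℝ) → ℝ := fun s => ind (∀ k, s k < θ k) with hgR_def
  have hgLmeas : Measurable gL := by
    have h : gL = Set.indicator {s : Fin K → ℝ | ∀ k, s k ≤ θ k} (fun _ => (1 : ℝ)) := by
      funext s; by_cases h : ∀ k, s k ≤ θ k <;> simp [hgL_def, ind, h, Set.indicator]
    rw [h]; exact measurable_const.indicator measN
  have hgRmeas : Measurable gR := by
    have h : gR = Set.indicator {s : Fin K → ℝ | ∀ k, s k < θ k} (fun _ => (1 : ℝ)) := by
      funext s; by_cases h : ∀ k, s k < θ k <;> simp [hgR_def, ind, h, Set.indicator]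
    rw [h]; exact measurable_const.indicator measA
  -- the combined family of indicator random variables
  set W : Fin M ⊕ Fin M → Ω → ℝ :=
    fun i => (Sum.elim (fun _ : Fin M => gL) (fun _ : Fin M => gR) i) ∘ (Sum.elim S Sa i)
    with hW_def
  have hWindep : iIndepFun W P := by
    refine hindep.comp _ fun i => ?_
    cases i with
    | inl m => exact hgLmeas
    | inr m => exact hgRmeas
  have hWmeas : ∀ i, Measurable (W i) := fun i => by
    cases i with
    | inl m => exact hgLmeas.comp (hSmeas m)
    | inr m => exact hgRmeas.comp (hSameas m)
  have hW01 : ∀ i ω, W i ω = 0 ∨ W i ω = 1 := by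
    intro i ω
    cases i with
    | inl m =>
        by_cases h : ∀ k, S m ω k ≤ θ k
        · right; simp [hW_def, hgL_def, ind, h]
        · left; simp [hW_def, hgL_def, ind, h]
    | inr m =>
        by_cases h : ∀ k, Sa m ω k < θ k
        · right; simp [hW_def, hgR_def, ind, h]
        · left; simp [hW_def, hgR_def, ind, h]
  -- means
  set pN : ℝ := gNull σ n θ with hpN_def
  set pA : ℝ := gAlt σ μa n θ with hpA_def
  have hmeasureN : ∀ m : Fin M, P ((S m) ⁻¹' {s : Fin K → ℝ | ∀ k, s k ≤ θ k}) =
      zPathLaw σ 0 n {s : Fin K → ℝ | ∀ k, s k ≤ θ k} := by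
    intro m
    rw [← hSlaw m, Measure.map_apply (hSmeas m) measN]
  have hmeasureA : ∀ m : Fin M, P ((Sa m) ⁻¹' {s : Fin K → ℝ | ∀ k, s k < θ k}) =
      zPathLaw σ μa n {s : Fin K → ℝ | ∀ k, s k < θ k} := by
    intro m
    rw [← hSalaw m, Measure.map_apply (hSameas m) measA]
  have hmeanL : ∀ m : Fin M, ∫ ω, W (Sum.inl m) ω ∂P = pN := by
    intro m
    have hind : (fun ω => W (Sum.inl m) ω) =
        Set.indicator ((S m) ⁻¹' {s : Fin K → ℝ | ∀ k, s k ≤ θ k}) (fun _ => (1 : ℝ)) := by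
      funext ω
      by_cases h : ∀ k, S m ω k ≤ θ k <;>
        simp [hW_def, hgL_def, ind, h, Set.indicator, Set.mem_preimage]
    rw [hind, integral_indicator_const _ ((hSmeas m) measN), smul_eq_mul, mul_one, measureReal_def,
      hmeasureN m]
    rfl
  have hmeanR : ∀ m : Fin M, ∫ ω, W (Sum.inr m) ω ∂P = pA := by
    intro m
    have hind : (fun ω => W (Sum.inr m) ω) =
        Set.indicator ((Sa m) ⁻¹' {s : Fin K → ℝ | ∀ k, s k < θ k}) (fun _ => (1 : ℝ)) := by
      funext ω
      by_cases h : ∀ k, Sa m ω k < θ k <;>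
        simp [hW_def, hgR_def, ind, h, Set.indicator, Set.mem_preimage]
    rw [hind, integral_indicator_const _ ((hSameas m) measA), smul_eq_mul, mul_one, measureReal_def,
      hmeasureA m]
    rfl
  -- probability bounds on the means
  have m0 : Fin M := ⟨0, hMpos⟩
  have hpN0 : 0 ≤ pN := ENNReal.toReal_nonneg
  have hpN1 : pN ≤ 1 := by
    have h := prob_le_one (μ := P) (s := (S m0) ⁻¹' {s : Fin K → ℝ | ∀ k, s k ≤ θ k})
    have h2 := ENNReal.toReal_mono ENNReal.one_ne_top h
    rw [hmeasureN m0] at h2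
    simpa [hpN_def, gNull] using h2
  have hpA0 : 0 ≤ pA := ENNReal.toReal_nonneg
  have hpA1 : pA ≤ 1 := by
    have h := prob_le_one (μ := P) (s := (Sa m0) ⁻¹' {s : Fin K → ℝ | ∀ k, s k < θ k})
    have h2 := ENNReal.toReal_mono ENNReal.one_ne_top h
    rw [hmeasureA m0] at h2
    simpa [hpA_def, gAlt] using h2
  -- the two index sets
  set sL : Finset (Fin M ⊕ Fin M) :=
    Finset.univ.map ⟨Sum.inl, Sum.inl_injective⟩ with hsL_def
  set sR : Finset (Fin M ⊕ Fin M) :=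
    Finset.univ.map ⟨Sum.inr, Sum.inr_injective⟩ with hsR_def
  have hsLcard : sL.card = M := by simp [hsL_def]
  have hsRcard : sR.card = M := by simp [hsR_def]
  have hsLsum : ∀ ω, ∑ i ∈ sL, W i ω = ∑ m : Fin M, W (Sum.inl m) ω := by
    intro ω; rw [hsL_def, Finset.sum_map]; rfl
  have hsRsum : ∀ ω, ∑ i ∈ sR, W i ω = ∑ m : Fin M, W (Sum.inr m) ω := by
    intro ω; rw [hsR_def, Finset.sum_map]; rfl
  -- tail bounds
  have hTN := tail_lower hWindep hWmeas sL hW01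
    (fun i hi => by
      obtain ⟨m, -, rfl⟩ := Finset.mem_map.mp hi
      exact hmeanL m) hpN0 hpN1 hεbar
  have hTA := tail_upper hWindep hWmeas sR hW01
    (fun i hi => by
      obtain ⟨m, -, rfl⟩ := Finset.mem_map.mp hi
      exact hmeanR m) hpA0 hpA1 hεbar
  rw [hsLcard] at hTN
  rw [hsRcard] at hTA
  -- the exponential bound
  have hexp : Real.exp (-2 * (M : ℝ) * εbar ^ 2) ≤ η / 2 := by
    rw [← Real.exp_log (show (0 : ℝ) < η / 2 by linarith)]
    apply Real.exp_le_exp.mpr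
    have h2 : Real.log (2 / η) ≤ 2 * (M : ℝ) * εbar ^ 2 := by
      rw [div_le_iff₀ (by positivity)] at hM; linarith
    have h3 : Real.log (η / 2) = -Real.log (2 / η) := by
      rw [← Real.log_inv]
      congr 1
      rw [inv_div]
    linarith
  -- the two bad events
  set TN : Set Ω := {ω | ∑ i ∈ sL, W i ω ≤ (M : ℝ) * (pN - εbar)} with hTN_def
  set TA : Set Ω := {ω | (M : ℝ) * (pA + εbar) ≤ ∑ i ∈ sR, W i ω} with hTA_def
  have hPTN : P TN ≤ ENNReal.ofReal (η / 2) := by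
    rw [← ENNReal.ofReal_toReal (measure_ne_top P TN)]
    exact ENNReal.ofReal_le_ofReal (hTN.trans hexp)
  have hPTA : P TA ≤ ENNReal.ofReal (η / 2) := by
    rw [← ENNReal.ofReal_toReal (measure_ne_top P TA)]
    exact ENNReal.ofReal_le_ofReal (hTA.trans hexp)
  -- good event gives feasibility
  have hsub : (TN ∪ TA)ᶜ ⊆
      {ω | (FeasM (fun m => S m ω) (fun m => Sa m ω) θlo θhi α β).Nonempty} := by
    intro ω hω
    rw [Set.mem_compl_iff, Set.mem_union] at hω
    push_neg at hω
    obtain ⟨hωN, hωA⟩ := hω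
    rw [hTN_def, Set.mem_setOf_eq, not_le] at hωN
    rw [hTA_def, Set.mem_setOf_eq, not_le] at hωA
    refine ⟨θ, hθbox, ?_, ?_⟩
    · -- empirical null bound
      have hsum : empNull (fun m => S m ω) θ = (1 / M : ℝ) * ∑ i ∈ sL, W i ω := by
        rw [hsLsum ω]; rfl
      rw [hsum]
      have h1 : 1 - α ≤ pN - εbar := by
        have := hθN
        simp only [hpN_def]
        linarith
      have h2 : (M : ℝ) * (1 - α) ≤ ∑ i ∈ sL, W i ω := by
        calc (M : ℝ) * (1 - α) ≤ (M : ℝ) * (pN - εbar) := by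
              exact mul_le_mul_of_nonneg_left h1 hMposR.le
          _ ≤ ∑ i ∈ sL, W i ω := hωN.le
      rw [one_div, inv_mul_eq_div, le_div_iff₀ hMposR]
      linarith
    · -- empirical alternative bound
      have hsum : empAlt (fun m => Sa m ω) θ = (1 / M : ℝ) * ∑ i ∈ sR, W i ω := by
        rw [hsRsum ω]; rfl
      rw [hsum]
      have h1 : pA + εbar ≤ β := by
        have := hθA
        simp only [hpA_def]
        linarith
      have h2 : ∑ i ∈ sR, W i ω ≤ (M : ℝ) * β := by
        calc ∑ i ∈ sR, W i ω ≤ (M : ℝ) * (pA + εbar) := hωA.le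
          _ ≤ (M : ℝ) * β := mul_le_mul_of_nonneg_left h1 hMposR.le
      rw [one_div, inv_mul_eq_div, div_le_iff₀ hMposR]
      linarith
  -- union bound and conclusion
  have hunion : P (TN ∪ TA) ≤ ENNReal.ofReal η := by
    calc P (TN ∪ TA) ≤ P TN + P TA := measure_union_le TN TA
      _ ≤ ENNReal.ofReal (η / 2) + ENNReal.ofReal (η / 2) := add_le_add hPTN hPTA
      _ = ENNReal.ofReal η := by
          rw [← ENNReal.ofReal_add (by linarith) (by linarith)]
          norm_num
  have hcompl : 1 - ENNReal.ofReal η ≤ P ((TN ∪ TA)ᶜ) := by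
    have h1 : (1 : ℝ≥0∞) ≤ P (TN ∪ TA) + P ((TN ∪ TA)ᶜ) := by
      rw [← measure_univ (μ := P), ← Set.union_compl_self (TN ∪ TA)]
      exact measure_union_le _ _
    have h2 : 1 - P (TN ∪ TA) ≤ P ((TN ∪ TA)ᶜ) := tsub_le_iff_left.mpr h1
    exact le_trans (tsub_le_tsub_left hunion 1) h2
  calc ENNReal.ofReal (1 - η) = 1 - ENNReal.ofReal η := by
        rw [ENNReal.ofReal_sub 1 hη0.le, ENNReal.ofReal_one]
    _ ≤ P ((TN ∪ TA)ᶜ) := hcompl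
    _ ≤ _ := measure_mono hsub
end
end

section
/- The set {θ ∈ ℝ^K : MFCQ fails at θ for the true design problem} has Lebesgue measure zero. -/
open MeasureTheory ProbabilityTheory Finset
open scoped ENNReal

noncomputable section

/-- Optimal value `v*(α,β)` of the true design problem. -/
def vStar {K : ℕ} (hK : 0 < K) (σ μa : ℝ) (n : Fin K → ℕ) (θlo θhi α β : ℝ) : ℝ :=
  sInf (fObj hK σ μa n '' Feas σ μa n θlo θhi α β)

/-- The set `S(α,β)` of optimal solutions of the true design problem. -/
def OptSet {K : ℕ} (hK : 0 < K) (σ μa : ℝ) (n : Fin K → ℕ) (θlo θhi α β : ℝ) :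
    Set (Fin K → ℝ) :=
  {θ | θ ∈ Feas σ μa n θlo θhi α β ∧
    ∀ θ' ∈ Feas σ μa n θlo θhi α β, fObj hK σ μa n θ ≤ fObj hK σ μa n θ'}

/-- `θ` is an optimal solution of the SAA problem at levels `(α, β)`. -/
def SAAOpt {K M : ℕ} (hK : 0 < K) (n : Fin K → ℕ) (S Sa : Fin M → Fin K → ℝ)
    (θlo θhi α β : ℝ) (θ : Fin K → ℝ) : Prop :=
  θ ∈ FeasM S Sa θlo θhi α β ∧
    ∀ θ' ∈ FeasM S Sa θlo θhi α β, empObj hK n Sa θ ≤ empObj hK n Sa θ'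

/-- The Mangasarian–Fromovitz constraint qualification at `θ` for the true design
problem written in standard form `min f` s.t. `1−α−g₀(θ) ≤ 0`, `g_a(θ)−β ≤ 0`,
`θlo − θ_k ≤ 0`, `θ_k − θhi ≤ 0`: there is a direction `ξ` with `∇h_j(θ)·ξ < 0`
for every active constraint `j`. -/
def MFCQ {K : ℕ} (σ μa : ℝ) (n : Fin K → ℕ) (θlo θhi α β : ℝ)
    (θ : Fin K → ℝ) : Prop :=
  ∃ ξ : Fin K → ℝ,
    (1 - α - gNull σ n θ = 0 →
      fderiv ℝ (fun t => 1 - α - gNull σ n t) θ ξ < 0) ∧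
    (gAlt σ μa n θ - β = 0 →
      fderiv ℝ (fun t => gAlt σ μa n t - β) θ ξ < 0) ∧
    (∀ k, θlo - θ k = 0 →
      fderiv ℝ (fun t : Fin K → ℝ => θlo - t k) θ ξ < 0) ∧
    (∀ k, θ k - θhi = 0 →
      fderiv ℝ (fun t : Fin K → ℝ => t k - θhi) θ ξ < 0)


/-! ### Auxiliary lemmas -/

section Aux

variable {K : ℕ}

lemma ncum_strictMono (n : Fin K → ℕ) (hn : ∀ k, 0 < n k) : StrictMono (Ncum n) := by
  intro j k hjk
  refine Finset.sum_lt_sum_of_subset (Finset.Iic_subset_Iic.2 hjk.le)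
    (Finset.mem_Iic.2 le_rfl) ?_ (hn k) (fun _ _ _ => Nat.zero_le _)
  simp [Finset.mem_Iic, hjk.not_ge]

lemma ncum_pos (n : Fin K → ℕ) (hn : ∀ k, 0 < n k) (k : Fin K) : 0 < Ncum n k :=
  Finset.sum_pos (fun i _ => hn i) ⟨k, Finset.mem_Iic.2 le_rfl⟩

lemma ncum_le_ntot (n : Fin K → ℕ) (k : Fin K) : Ncum n k ≤ Ntot n :=
  Finset.sum_le_sum_of_subset (Finset.subset_univ _)

lemma continuous_zStat (σ : ℝ) (n : Fin K → ℕ) : Continuous (zStat σ n) := by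
  refine continuous_pi fun k => ?_
  refine (continuous_finset_sum _ fun i _ => ?_).div_const _
  by_cases h : (i : ℕ) < Ncum n k
  · simpa only [if_pos h] using continuous_apply i
  · simpa only [if_neg h] using (continuous_const : Continuous fun _ : Fin (Ntot n) → ℝ => (0:ℝ))

lemma zStat_surjective (σ : ℝ) (hσ : σ ≠ 0) (n : Fin K → ℕ) (hn : ∀ k, 0 < n k) :
    Function.Surjective (zStat σ n) := by
  intro t
  set c : Fin K → ℝ := fun k => t k * (σ * Real.sqrt (Ncum n k)) with hc
  set F : ℕ → ℝ := fun m => ∑ k : Fin K, if Ncum n k = m then c k else 0 with hF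
  refine ⟨fun i => F ((i : ℕ) + 1) - F (i : ℕ), ?_⟩
  funext k
  have hd : (σ * Real.sqrt (Ncum n k)) ≠ 0 := by
    have : (0:ℝ) < (Ncum n k : ℝ) := by exact_mod_cast ncum_pos n hn k
    exact mul_ne_zero hσ (Real.sqrt_pos.2 this).ne'
  have hsum : (∑ i : Fin (Ntot n), if (i : ℕ) < Ncum n k then
      F ((i : ℕ) + 1) - F (i : ℕ) else 0) = c k := by
    rw [Fin.sum_univ_eq_sum_range (fun j => if j < Ncum n k then F (j + 1) - F j else 0)
      (Ntot n), ← Finset.sum_filter]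
    have hfil : (Finset.range (Ntot n)).filter (fun j => j < Ncum n k)
        = Finset.range (Ncum n k) := by
      ext j
      simp only [Finset.mem_filter, Finset.mem_range]
      exact ⟨fun h => h.2, fun h => ⟨lt_of_lt_of_le h (ncum_le_ntot n k), h⟩⟩
    rw [hfil, Finset.sum_range_sub F]
    have hF0 : F 0 = 0 :=
      Finset.sum_eq_zero fun j _ => if_neg (ncum_pos n hn j).ne'
    have hFk : F (Ncum n k) = c k := by
      show (∑ j : Fin K, if Ncum n j = Ncum n k then c j else 0) = c k
      rw [Finset.sum_eq_single_of_mem k (Finset.mem_univ k)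
        (fun j _ hjk => if_neg (fun h => hjk ((ncum_strictMono n hn).injective h)))]
      simp
    rw [hF0, hFk, sub_zero]
  show (∑ i : Fin (Ntot n), if (i : ℕ) < Ncum n k then
      F ((i : ℕ) + 1) - F (i : ℕ) else 0) / (σ * Real.sqrt (Ncum n k)) = t k
  rw [hsum, hc]
  exact mul_div_cancel_right₀ (t k) hd

lemma gaussianReal_isOpenPos (μ : ℝ) {v : NNReal} (hv : v ≠ 0) :
    (gaussianReal μ v).IsOpenPosMeasure :=
  ⟨fun U hU hne h0 =>
    hU.measure_ne_zero volume hne ((gaussianReal_absolutelyContinuous' μ hv) h0)⟩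

lemma zPathLaw_prob (σ μ : ℝ) (n : Fin K → ℕ) : IsProbabilityMeasure (zPathLaw σ μ n) := by
  unfold zPathLaw
  haveI : IsProbabilityMeasure (gaussianReal μ ⟨σ ^ 2, sq_nonneg σ⟩) := instIsProbabilityMeasureGaussianReal _ _
  exact Measure.isProbabilityMeasure_map (continuous_zStat σ n).measurable.aemeasurable

lemma gNull_mono (σ : ℝ) (n : Fin K → ℕ) : Monotone (gNull σ n) := by
  intro a b hab
  haveI := zPathLaw_prob (K := K) σ 0 n
  exact ENNReal.toReal_mono (measure_ne_top _ _)
    (measure_mono fun s hs k => le_trans (hs k) (hab k))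

lemma gAlt_mono (σ μa : ℝ) (n : Fin K → ℕ) : Monotone (gAlt σ μa n) := by
  intro a b hab
  haveI := zPathLaw_prob (K := K) σ μa n
  exact ENNReal.toReal_mono (measure_ne_top _ _)
    (measure_mono fun s hs k => lt_of_lt_of_le (hs k) (hab k))

lemma measurableSet_le_box (θ : Fin K → ℝ) :
    MeasurableSet {s : Fin K → ℝ | ∀ k, s k ≤ θ k} := by
  have : {s : Fin K → ℝ | ∀ k, s k ≤ θ k} = ⋂ k, {s | s k ≤ θ k} := by
    ext; simp [Set.mem_iInter]
  rw [this]
  exact MeasurableSet.iInter fun k =>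
    measurableSet_le (measurable_pi_apply k) measurable_const

lemma measurableSet_lt_box (θ : Fin K → ℝ) :
    MeasurableSet {s : Fin K → ℝ | ∀ k, s k < θ k} := by
  have : {s : Fin K → ℝ | ∀ k, s k < θ k} = ⋂ k, {s | s k < θ k} := by
    ext; simp [Set.mem_iInter]
  rw [this]
  exact MeasurableSet.iInter fun k =>
    measurableSet_lt (measurable_pi_apply k) measurable_const

lemma zPathLaw_box_pos (σ μ : ℝ) (hσ : 0 < σ) (n : Fin K → ℕ) (hn : ∀ k, 0 < n k)
    (θ : Fin K → ℝ) {δ : ℝ} (hδ : 0 < δ) :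
    0 < zPathLaw σ μ n {s : Fin K → ℝ | ∀ k, s k ∈ Set.Ioo (θ k - δ) (θ k)} := by
  have hv : (⟨σ ^ 2, sq_nonneg σ⟩ : NNReal) ≠ 0 := by
    intro h
    exact (pow_ne_zero 2 hσ.ne') (congrArg NNReal.toReal h)
  set O := {s : Fin K → ℝ | ∀ k, s k ∈ Set.Ioo (θ k - δ) (θ k)} with hO
  have hOopen : IsOpen O := by
    have : O = ⋂ k, (fun s : Fin K → ℝ => s k) ⁻¹' Set.Ioo (θ k - δ) (θ k) := by
      ext; simp [hO, Set.mem_iInter]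
    rw [this]
    exact isOpen_iInter_of_finite fun k => isOpen_Ioo.preimage (continuous_apply k)
  unfold zPathLaw
  rw [Measure.map_apply (continuous_zStat σ n).measurable hOopen.measurableSet]
  haveI : ∀ i : Fin (Ntot n),
      (gaussianReal μ ⟨σ ^ 2, sq_nonneg σ⟩).IsOpenPosMeasure :=
    fun _ => gaussianReal_isOpenPos μ hv
  haveI : (Measure.pi fun _ : Fin (Ntot n) => gaussianReal μ ⟨σ ^ 2, sq_nonneg σ⟩).IsOpenPosMeasure := by
    haveI := gaussianReal_isOpenPos μ hv; haveI : IsProbabilityMeasure (gaussianReal μ ⟨σ ^ 2, sq_nonneg σ⟩) := instIsProbabilityMeasureGaussianReal _ _; infer_instance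
  refine (hOopen.preimage (continuous_zStat σ n)).measure_pos _ ?_
  obtain ⟨x, hx⟩ := zStat_surjective σ hσ.ne' n hn (fun k => θ k - δ / 2)
  refine ⟨x, ?_⟩
  simp only [Set.mem_preimage, hx, hO, Set.mem_setOf_eq, Set.mem_Ioo]
  intro k
  constructor <;> linarith

lemma gNull_lt (σ : ℝ) (hσ : 0 < σ) (n : Fin K → ℕ) (hn : ∀ k, 0 < n k) (hK : 0 < K)
    (θ : Fin K → ℝ) {δ : ℝ} (hδ : 0 < δ) :
    gNull σ n (fun k => θ k - δ) < gNull σ n θ := by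
  haveI := zPathLaw_prob (K := K) σ 0 n
  set P := zPathLaw σ 0 n with hP
  set A := {s : Fin K → ℝ | ∀ k, s k ≤ θ k - δ} with hA
  set B := {s : Fin K → ℝ | ∀ k, s k ≤ θ k} with hB
  set O := {s : Fin K → ℝ | ∀ k, s k ∈ Set.Ioo (θ k - δ) (θ k)} with hOdef
  have hOmeas : MeasurableSet O := by
    have : O = ⋂ k, (fun s : Fin K → ℝ => s k) ⁻¹' Set.Ioo (θ k - δ) (θ k) := by
      ext; simp [hOdef, Set.mem_iInter]
    rw [this]
    exact (isOpen_iInter_of_finite fun k =>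
      isOpen_Ioo.preimage (continuous_apply k)).measurableSet
  have hPO : 0 < P O := zPathLaw_box_pos σ 0 hσ n hn θ hδ
  have hdisj : Disjoint A O := Set.disjoint_left.2
    fun s hsA hsO => ((hsO ⟨0, hK⟩).1.not_ge (hsA ⟨0, hK⟩))
  have hsub : A ∪ O ⊆ B := Set.union_subset
    (fun s hs k => le_trans (hs k) (by linarith))
    (fun s hs k => (hs k).2.le)
  have h3 : P A < P B := by
    calc P A < P A + P O := ENNReal.lt_add_right (measure_ne_top _ _) hPO.ne'
    _ = P (A ∪ O) := (measure_union hdisj hOmeas).symm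
    _ ≤ P B := measure_mono hsub
  have := (ENNReal.toReal_lt_toReal (measure_ne_top P A) (measure_ne_top P B)).2 h3
  simpa [gNull, hP, hA, hB] using this

lemma gAlt_lt (σ μ : ℝ) (hσ : 0 < σ) (n : Fin K → ℕ) (hn : ∀ k, 0 < n k) (hK : 0 < K)
    (θ : Fin K → ℝ) {δ : ℝ} (hδ : 0 < δ) :
    gAlt σ μ n (fun k => θ k - δ) < gAlt σ μ n θ := by
  haveI := zPathLaw_prob (K := K) σ μ n
  set P := zPathLaw σ μ n with hP
  set A := {s : Fin K → ℝ | ∀ k, s k < θ k - δ} with hA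
  set B := {s : Fin K → ℝ | ∀ k, s k < θ k} with hB
  set O := {s : Fin K → ℝ | ∀ k, s k ∈ Set.Ioo (θ k - δ) (θ k)} with hOdef
  have hOmeas : MeasurableSet O := by
    have : O = ⋂ k, (fun s : Fin K → ℝ => s k) ⁻¹' Set.Ioo (θ k - δ) (θ k) := by
      ext; simp [hOdef, Set.mem_iInter]
    rw [this]
    exact (isOpen_iInter_of_finite fun k =>
      isOpen_Ioo.preimage (continuous_apply k)).measurableSet
  have hPO : 0 < P O := zPathLaw_box_pos σ μ hσ n hn θ hδ
  have hdisj : Disjoint A O := Set.disjoint_left.2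
    fun s hsA hsO => ((hsA ⟨0, hK⟩).not_gt (hsO ⟨0, hK⟩).1)
  have hsub : A ∪ O ⊆ B := Set.union_subset
    (fun s hs k => lt_of_lt_of_le (hs k) (by linarith))
    (fun s hs k => (hs k).2)
  have h3 : P A < P B := by
    calc P A < P A + P O := ENNReal.lt_add_right (measure_ne_top _ _) hPO.ne'
    _ = P (A ∪ O) := (measure_union hdisj hOmeas).symm
    _ ≤ P B := measure_mono hsub
  have := (ENNReal.toReal_lt_toReal (measure_ne_top P A) (measure_ne_top P B)).2 h3
  simpa [gAlt, hP, hA, hB] using this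

lemma tendsto_diag_sub (θ : Fin K → ℝ) :
    Filter.Tendsto (fun m : ℕ => (fun k => θ k - 1 / ((m : ℝ) + 1) : Fin K → ℝ))
      Filter.atTop (nhds θ) := by
  rw [tendsto_pi_nhds]
  intro k
  have h := tendsto_one_div_add_atTop_nhds_zero_nat (𝕜 := ℝ)
  simpa using (tendsto_const_nhds (x := θ k) (f := Filter.atTop (α := ℕ))).sub h

lemma tendsto_diag_add (θ : Fin K → ℝ) :
    Filter.Tendsto (fun m : ℕ => (fun k => θ k + 1 / ((m : ℝ) + 1) : Fin K → ℝ))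
      Filter.atTop (nhds θ) := by
  rw [tendsto_pi_nhds]
  intro k
  have h := tendsto_one_div_add_atTop_nhds_zero_nat (𝕜 := ℝ)
  simpa using (tendsto_const_nhds (x := θ k) (f := Filter.atTop (α := ℕ))).add h

end Aux

/-- Lemma `MFCQ`. The set of points `θ ∈ ℝ^K` at which MFCQ fails
for the true design problem has Lebesgue measure zero. -/
theorem mfcq_fails_measure_zero
    {K : ℕ} (hK : 0 < K) (n : Fin K → ℕ) (hn : ∀ k, 0 < n k)
    (σ μa : ℝ) (hσ : 0 < σ) (hμa : 0 < μa)
    (α β θlo θhi : ℝ) (hα : α ∈ Set.Ioo (0 : ℝ) 1) (hβ : β ∈ Set.Ioo (0 : ℝ) 1)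
    (hθ : θlo < θhi) :
    (volume : Measure (Fin K → ℝ))
      {θ | ¬ MFCQ σ μa n θlo θhi α β θ} = 0 := by
  classical
  set U1 : Set (Fin K → ℝ) := {θ | 1 - α ≤ gNull σ n θ} with hU1def
  set U2 : Set (Fin K → ℝ) := {θ | β ≤ gAlt σ μa n θ} with hU2def
  set V : Fin K → Set (Fin K → ℝ) := fun k => {θ | θlo ≤ θ k} with hVdef
  set W : Fin K → Set (Fin K → ℝ) := fun k => {θ | θ k ≤ θhi} with hWdef
  have hcover : {θ | ¬ MFCQ σ μa n θlo θhi α β θ} ⊆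
      frontier U1 ∪ frontier U2 ∪ (⋃ k, frontier (V k)) ∪ ⋃ k, frontier (W k) := by
    intro θ hθ
    by_contra hmem
    simp only [Set.mem_union, Set.mem_iUnion, not_or, not_exists] at hmem
    obtain ⟨⟨⟨h1, h2⟩, h3⟩, h4⟩ := hmem
    apply hθ
    refine ⟨0, fun hg0 => ?_, fun hga => ?_, fun k hk => ?_, fun k hk => ?_⟩
    · exfalso
      apply h1
      rw [frontier_eq_closure_inter_closure]
      refine ⟨subset_closure (by simp only [hU1def, Set.mem_setOf_eq]; linarith), ?_⟩
      refine mem_closure_of_tendsto (tendsto_diag_sub θ) (Filter.Eventually.of_forall fun m => ?_)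
      have hδ : (0 : ℝ) < 1 / ((m : ℝ) + 1) := by positivity
      have := gNull_lt σ hσ n hn hK θ hδ
      simp only [hU1def, Set.mem_compl_iff, Set.mem_setOf_eq, not_le]
      linarith
    · exfalso
      apply h2
      rw [frontier_eq_closure_inter_closure]
      refine ⟨subset_closure (by simp only [hU2def, Set.mem_setOf_eq]; linarith), ?_⟩
      refine mem_closure_of_tendsto (tendsto_diag_sub θ) (Filter.Eventually.of_forall fun m => ?_)
      have hδ : (0 : ℝ) < 1 / ((m : ℝ) + 1) := by positivity
      have := gAlt_lt σ μa hσ n hn hK θ hδ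
      simp only [hU2def, Set.mem_compl_iff, Set.mem_setOf_eq, not_le]
      linarith
    · exfalso
      apply h3 k
      rw [frontier_eq_closure_inter_closure]
      refine ⟨subset_closure (by simp only [hVdef, Set.mem_setOf_eq]; linarith), ?_⟩
      refine mem_closure_of_tendsto (tendsto_diag_sub θ) (Filter.Eventually.of_forall fun m => ?_)
      have hδ : (0 : ℝ) < 1 / ((m : ℝ) + 1) := by positivity
      simp only [hVdef, Set.mem_compl_iff, Set.mem_setOf_eq, not_le]
      linarith
    · exfalso
      apply h4 k
      rw [frontier_eq_closure_inter_closure]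
      refine ⟨subset_closure (by simp only [hWdef, Set.mem_setOf_eq]; linarith), ?_⟩
      refine mem_closure_of_tendsto (tendsto_diag_add θ) (Filter.Eventually.of_forall fun m => ?_)
      have hδ : (0 : ℝ) < 1 / ((m : ℝ) + 1) := by positivity
      simp only [hWdef, Set.mem_compl_iff, Set.mem_setOf_eq, not_le]
      linarith
  refine measure_mono_null hcover ?_
  have hU1 : IsUpperSet U1 := fun a b hab ha => le_trans ha (gNull_mono σ n hab)
  have hU2 : IsUpperSet U2 := fun a b hab ha => le_trans ha (gAlt_mono σ μa n hab)
  have hV : ∀ k, IsUpperSet (V k) := fun k a b hab ha => le_trans ha (hab k)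
  have hW : ∀ k, IsLowerSet (W k) := fun k a b hab ha => le_trans (hab k) ha
  exact measure_union_null
    (measure_union_null
      (measure_union_null hU1.null_frontier hU2.null_frontier)
      (measure_iUnion_null fun k => (hV k).null_frontier))
    (measure_iUnion_null fun k => (hW k).null_frontier)
end
end

section
/- Let n ≥ 1 be an integer and δ ∈ ℝ. Let Z and V be independent random variables with Z distributed N(δ,1) and V chi-squared with n degrees of freedom, and set T = Z/√(V/n) (so T has the noncentral t distribution with n degrees of freedom and noncentrality parameter δ). Then the law of T is absolutely continuous with a density p satisfying p(t) ≤ 1/√(2π) for all t ∈ ℝ; equivalently, P(a ≤ T ≤ b) ≤ (b−a)/√(2π) for all real a ≤ b. -/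
open MeasureTheory ProbabilityTheory
open scoped ENNReal NNReal
open Real

noncomputable section

/-- The chi-squared distribution with `n` degrees of freedom, i.e. the Gamma
distribution with shape `n/2` and rate `1/2`. -/
def chiSqMeasure (n : ℝ) : Measure ℝ := gammaMeasure (n / 2) (1 / 2)

lemma aux_gammaPDF_mul {a r : ℝ} (ha : 0 < a) (hr : 0 < r) (x : ℝ) :
    ENNReal.ofReal x * gammaPDF a r x = ENNReal.ofReal (a / r) * gammaPDF (a + 1) r x := by
  rcases lt_trichotomy x 0 with hx | hx | hx
  · rw [gammaPDF_of_neg hx, gammaPDF_of_neg hx, mul_zero, mul_zero]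
  · subst hx
    rw [ENNReal.ofReal_zero, zero_mul, gammaPDF_of_nonneg le_rfl,
      Real.zero_rpow (by intro h; nlinarith : a + 1 - 1 ≠ 0)]
    simp
  · rw [gammaPDF_of_nonneg hx.le, gammaPDF_of_nonneg hx.le,
      ← ENNReal.ofReal_mul hx.le, ← ENNReal.ofReal_mul (by positivity)]
    congr 1
    have hΓ : Real.Gamma (a + 1) = a * Real.Gamma a := Real.Gamma_add_one ha.ne'
    have hra : r ^ (a + 1) = r ^ a * r := by rw [Real.rpow_add_one hr.ne']
    have hxa : x ^ (a + 1 - 1) = x ^ (a - 1) * x := by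
      rw [show a + 1 - 1 = a by ring, ← Real.rpow_add_one hx.ne' (a - 1),
        sub_add_cancel]
    rw [hΓ, hra, hxa]
    have hΓ0 : Real.Gamma a ≠ 0 := (Real.Gamma_pos_of_pos ha).ne'
    field_simp

lemma aux_gamma_mean {a r : ℝ} (ha : 0 < a) (hr : 0 < r) :
    ∫⁻ x, ENNReal.ofReal x ∂(gammaMeasure a r) = ENNReal.ofReal (a / r) := by
  have hfm : Measurable (gammaPDF a r) := (measurable_gammaPDFReal a r).ennreal_ofReal
  rw [gammaMeasure, lintegral_withDensity_eq_lintegral_mul _ hfm ENNReal.measurable_ofReal]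
  have h : ∀ x : ℝ, gammaPDF a r x * ENNReal.ofReal x
      = ENNReal.ofReal (a / r) * gammaPDF (a + 1) r x := fun x => by
    rw [mul_comm, aux_gammaPDF_mul ha hr]
  calc ∫⁻ x, (gammaPDF a r * fun x => ENNReal.ofReal x) x
      = ∫⁻ x, ENNReal.ofReal (a / r) * gammaPDF (a + 1) r x := by
        refine lintegral_congr fun x => ?_
        simpa using h x
    _ = ENNReal.ofReal (a / r) := by
        have hfm2 : Measurable (gammaPDF (a + 1) r) :=
          (measurable_gammaPDFReal _ _).ennreal_ofReal
        rw [lintegral_const_mul _ hfm2,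
          lintegral_gammaPDF_eq_one (by linarith) hr, mul_one]

lemma aux_gamma_nonpos {a r : ℝ} : gammaMeasure a r (Set.Iic 0) = 0 := by
  rw [gammaMeasure, withDensity_apply _ measurableSet_Iic,
    ← setLIntegral_congr Iio_ae_eq_Iic,
    setLIntegral_congr_fun measurableSet_Iio
      (fun x (hx : x < 0) => gammaPDF_of_neg hx), lintegral_zero]

lemma aux_sqrt_le {n : ℕ} (hn : 1 ≤ n) :
    ∫⁻ v, ENNReal.ofReal (Real.sqrt (v / n)) ∂(chiSqMeasure n) ≤ 1 := by
  have hn0 : (0:ℝ) < n := by exact_mod_cast hn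
  have hprob : IsProbabilityMeasure (chiSqMeasure n) :=
    isProbabilityMeasure_gammaMeasure (by positivity) (by norm_num)
  have hpt : ∀ v : ℝ, ENNReal.ofReal (Real.sqrt (v / n)) ≤
      ENNReal.ofReal (1 / (2 * n)) * ENNReal.ofReal v + ENNReal.ofReal (1 / 2) := by
    intro v
    rcases le_or_gt v 0 with hv | hv
    · have h0 : Real.sqrt (v / n) = 0 := by
        exact Real.sqrt_eq_zero_of_nonpos (div_nonpos_of_nonpos_of_nonneg hv hn0.le)
      simp [h0]
    · rw [← ENNReal.ofReal_mul (by positivity), ← ENNReal.ofReal_add (by positivity) (by norm_num)]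
      apply ENNReal.ofReal_le_ofReal
      have h1 : Real.sqrt (v / n) ≤ (v / n + 1) / 2 := by
        nlinarith [Real.sq_sqrt (show (0:ℝ) ≤ v / n by positivity),
          sq_nonneg (Real.sqrt (v / n) - 1), Real.sqrt_nonneg (v / n)]
      calc Real.sqrt (v / n) ≤ (v / n + 1) / 2 := h1
        _ = 1 / (2 * n) * v + 1 / 2 := by field_simp
  calc ∫⁻ v, ENNReal.ofReal (Real.sqrt (v / n)) ∂(chiSqMeasure n)
      ≤ ∫⁻ v, (ENNReal.ofReal (1 / (2 * n)) * ENNReal.ofReal v + ENNReal.ofReal (1 / 2))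
        ∂(chiSqMeasure n) := lintegral_mono hpt
    _ = ENNReal.ofReal (1 / (2 * n)) * (∫⁻ v, ENNReal.ofReal v ∂(chiSqMeasure n))
        + ENNReal.ofReal (1 / 2) := by
        rw [lintegral_add_right _ measurable_const,
          lintegral_const_mul _ ENNReal.measurable_ofReal, lintegral_const,
          measure_univ, mul_one]
    _ = 1 := by
        rw [show (∫⁻ v, ENNReal.ofReal v ∂(chiSqMeasure n)) = ENNReal.ofReal ((n / 2) / (1 / 2))
            from aux_gamma_mean (by positivity) (by norm_num),
          show ((n : ℝ) / 2) / (1 / 2) = (n : ℝ) by ring,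
          ← ENNReal.ofReal_mul (by positivity),
          show 1 / (2 * (n : ℝ)) * n = 1 / 2 by field_simp,
          ← ENNReal.ofReal_add (by norm_num) (by norm_num)]
        norm_num

lemma aux_pdf_le (δ x : ℝ) : gaussianPDFReal δ 1 x ≤ (Real.sqrt (2 * π))⁻¹ := by
  rw [gaussianPDFReal]
  have h1 : ((1 : ℝ≥0) : ℝ) = 1 := rfl
  rw [h1, mul_one, mul_one]
  calc (Real.sqrt (2 * π))⁻¹ * rexp (-(x - δ) ^ 2 / 2)
      ≤ (Real.sqrt (2 * π))⁻¹ * 1 := by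
        refine mul_le_mul_of_nonneg_left ?_ (by positivity)
        rw [Real.exp_le_one_iff]
        have := sq_nonneg (x - δ)
        nlinarith
    _ = (Real.sqrt (2 * π))⁻¹ := mul_one _

lemma aux_pdf_scale (δ : ℝ) {c : ℝ} (hc : 0 < c) (w : ℝ≥0) (hw : (w : ℝ) = c⁻¹ ^ 2) (t : ℝ) :
    gaussianPDFReal (c⁻¹ * δ) (w * 1) t = c * gaussianPDFReal δ 1 (c * t) := by
  have hvv : w = (NNReal.mk (c ^ 2)⁻¹ (inv_nonneg.mpr (sq_nonneg _)) : ℝ≥0) := by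
    ext
    simp [hw, inv_pow]
  rw [hvv, gaussianPDFReal_mul hc.ne' t, abs_of_pos (inv_pos.mpr hc), ← mul_assoc,
    mul_inv_cancel₀ hc.ne', one_mul]

/-- Let `Z ~ N(δ, 1)` and `V ~ χ²_n` be independent, and let
`T = Z / √(V/n)` (a noncentral t random variable with `n` degrees of freedom and
noncentrality `δ`). Then the law of `T` has a density bounded by `1/√(2π)`;
equivalently, `P(a ≤ T ≤ b) ≤ (b − a)/√(2π)` for all `a ≤ b`. -/
theorem noncentral_t_density_bound
    (n : ℕ) (hn : 1 ≤ n) (δ : ℝ)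
    {Ω : Type*} [MeasurableSpace Ω] (P : Measure Ω) [IsProbabilityMeasure P]
    (Z V : Ω → ℝ) (hZ : Measurable Z) (hV : Measurable V)
    (hZlaw : P.map Z = gaussianReal δ 1)
    (hVlaw : P.map V = chiSqMeasure n)
    (hindep : IndepFun Z V P) :
    (∃ p : ℝ → ℝ,
      (∀ t, 0 ≤ p t ∧ p t ≤ 1 / Real.sqrt (2 * Real.pi)) ∧
      P.map (fun ω => Z ω / Real.sqrt (V ω / n)) =
        (volume : Measure ℝ).withDensity (fun t => ENNReal.ofReal (p t))) ∧
    ∀ a b : ℝ, a ≤ b →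
      P.map (fun ω => Z ω / Real.sqrt (V ω / n)) (Set.Icc a b) ≤
        ENNReal.ofReal ((b - a) / Real.sqrt (2 * Real.pi)) := by
  have hn0 : (0:ℝ) < n := by exact_mod_cast hn
  have hprob : IsProbabilityMeasure (chiSqMeasure n) :=
    isProbabilityMeasure_gammaMeasure (by positivity) (by norm_num)
  have hcm : Measurable (fun v : ℝ => Real.sqrt (v / n)) :=
    (measurable_id.div_const (n:ℝ)).sqrt
  have hmf : Measurable (fun q : ℝ × ℝ => q.1 / Real.sqrt (q.2 / n)) :=
    measurable_fst.div (measurable_snd.div_const _).sqrt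
  -- law of T as pushforward of the product measure
  have hT : P.map (fun ω => Z ω / Real.sqrt (V ω / n)) =
      ((gaussianReal δ 1).prod (chiSqMeasure n)).map
        (fun q : ℝ × ℝ => q.1 / Real.sqrt (q.2 / n)) := by
    rw [← hZlaw, ← hVlaw,
      ← (indepFun_iff_map_prod_eq_prod_map_map hZ.aemeasurable hV.aemeasurable).mp hindep,
      Measure.map_map hmf (hZ.prodMk hV)]
    rfl
  -- the density (as an ℝ≥0∞-valued function)
  set g : ℝ → ℝ → ℝ≥0∞ := fun v t =>
    ENNReal.ofReal (Real.sqrt (v / n) * gaussianPDFReal δ 1 (Real.sqrt (v / n) * t)) with hgdef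
  have hgmeas : Measurable (Function.uncurry g) := by
    refine Measurable.ennreal_ofReal ?_
    exact ((hcm.comp measurable_fst).mul ((measurable_gaussianPDFReal δ 1).comp
      ((hcm.comp measurable_fst).mul measurable_snd)))
  have hχpos : ∀ᵐ v ∂(chiSqMeasure n), 0 < v := by
    rw [ae_iff]
    have hset : {v : ℝ | ¬ 0 < v} = Set.Iic 0 := by ext v; simp
    rw [hset]
    exact aux_gamma_nonpos
  -- key identity: the law of T has density ∫⁻ v, g v t ∂χ²
  have hkey : ((gaussianReal δ 1).prod (chiSqMeasure n)).map
        (fun q : ℝ × ℝ => q.1 / Real.sqrt (q.2 / n)) =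
      volume.withDensity (fun t => ∫⁻ v, g v t ∂(chiSqMeasure n)) := by
    ext s hs
    rw [Measure.map_apply hmf hs, Measure.prod_apply_symm (hmf hs), withDensity_apply _ hs]
    have step : ∀ᵐ v ∂(chiSqMeasure n),
        (gaussianReal δ 1) ((fun z => (z, v)) ⁻¹'
            ((fun q : ℝ × ℝ => q.1 / Real.sqrt (q.2 / n)) ⁻¹' s))
          = ∫⁻ t in s, g v t := by
      filter_upwards [hχpos] with v hv
      have hcv : 0 < Real.sqrt (v / n) := Real.sqrt_pos.mpr (by positivity)
      have hsetv : ((fun z => (z, v)) ⁻¹'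
            ((fun q : ℝ × ℝ => q.1 / Real.sqrt (q.2 / n)) ⁻¹' s))
          = (fun z : ℝ => (Real.sqrt (v / n))⁻¹ * z) ⁻¹' s := by
        ext z
        simp [Set.mem_preimage, div_eq_inv_mul]
      rw [hsetv, ← Measure.map_apply (measurable_const_mul _) hs,
        gaussianReal_map_const_mul ((Real.sqrt (v / n))⁻¹)]
      have hvne : ((NNReal.mk ((Real.sqrt (v / n))⁻¹ ^ 2) (sq_nonneg _) : ℝ≥0) * 1) ≠ 0 := by
        rw [mul_one]
        intro h
        have h2 := congrArg NNReal.toReal h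
        simp only [NNReal.coe_mk, NNReal.coe_zero] at h2
        exact (by positivity : (0:ℝ) < (Real.sqrt (v / n))⁻¹ ^ 2).ne' h2
      rw [gaussianReal_apply _ hvne s]
      refine setLIntegral_congr_fun hs (fun t _ => ?_)
      show ENNReal.ofReal _ = ENNReal.ofReal _
      exact congrArg ENNReal.ofReal
        (aux_pdf_scale δ hcv (NNReal.mk ((Real.sqrt (v / n))⁻¹ ^ 2) (sq_nonneg _)) rfl t)
    rw [lintegral_congr_ae step, lintegral_lintegral_swap hgmeas.aemeasurable]
  -- uniform bound on the density
  have hbound : ∀ t, (∫⁻ v, g v t ∂(chiSqMeasure n))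
      ≤ ENNReal.ofReal ((Real.sqrt (2 * Real.pi))⁻¹) := by
    intro t
    calc ∫⁻ v, g v t ∂(chiSqMeasure n)
        ≤ ∫⁻ v, ENNReal.ofReal (Real.sqrt (v / n))
            * ENNReal.ofReal ((Real.sqrt (2 * Real.pi))⁻¹) ∂(chiSqMeasure n) := by
          refine lintegral_mono fun v => ?_
          rw [hgdef, ← ENNReal.ofReal_mul (Real.sqrt_nonneg _)]
          exact ENNReal.ofReal_le_ofReal
            (mul_le_mul_of_nonneg_left (aux_pdf_le δ _) (Real.sqrt_nonneg _))
      _ = (∫⁻ v, ENNReal.ofReal (Real.sqrt (v / n)) ∂(chiSqMeasure n))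
            * ENNReal.ofReal ((Real.sqrt (2 * Real.pi))⁻¹) :=
          lintegral_mul_const _ hcm.ennreal_ofReal
      _ ≤ 1 * ENNReal.ofReal ((Real.sqrt (2 * Real.pi))⁻¹) := by
          gcongr
          exact aux_sqrt_le hn
      _ = ENNReal.ofReal ((Real.sqrt (2 * Real.pi))⁻¹) := one_mul _
  have hne : ∀ t, (∫⁻ v, g v t ∂(chiSqMeasure n)) ≠ ⊤ :=
    fun t => ((hbound t).trans_lt ENNReal.ofReal_lt_top).ne
  constructor
  · refine ⟨fun t => (∫⁻ v, g v t ∂(chiSqMeasure n)).toReal, fun t => ⟨ENNReal.toReal_nonneg, ?_⟩, ?_⟩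
    · rw [one_div]
      exact ENNReal.toReal_le_of_le_ofReal (inv_nonneg.mpr (Real.sqrt_nonneg _)) (hbound t)
    · rw [hT, hkey]
      congr 1
      ext t
      rw [ENNReal.ofReal_toReal (hne t)]
  · intro a b hab
    rw [hT, hkey, withDensity_apply _ measurableSet_Icc]
    calc ∫⁻ t in Set.Icc a b, (∫⁻ v, g v t ∂(chiSqMeasure n))
        ≤ ∫⁻ _ in Set.Icc a b, ENNReal.ofReal ((Real.sqrt (2 * Real.pi))⁻¹) :=
          lintegral_mono fun t => hbound t
      _ = ENNReal.ofReal ((Real.sqrt (2 * Real.pi))⁻¹) * volume (Set.Icc a b) :=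
          setLIntegral_const _ _
      _ = ENNReal.ofReal ((b - a) / Real.sqrt (2 * Real.pi)) := by
          rw [Real.volume_Icc, ← ENNReal.ofReal_mul (by positivity)]
          congr 1
          rw [div_eq_inv_mul]
end
end
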